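/- Let K be an N×N Hermitian matrix, P a determinantal sampling design with kernel K, and let y = (y_1,…,y_N) and w = (w_1,…,w_N) be real vectors. Set t_y = ∑_{k∈U} y_k and, for s ⊆ U, t̂_{yw}(s) = ∑_{k∈s} w_k y_k. Then the mean square error satisfies ∑_{s ⊆ U} P(s)·(t̂_{yw}(s) − t_y)² = ∑_{k∈U} (w_k y_k)² K_{kk}(1 − K_{kk}) − ∑_{k≠l} w_k y_k w_l y_l |K_{kl}|² + ( ∑_{k∈U} (w_k K_{kk} − 1) y_k )². -/

import Mathlib

/-- `P` is a determinantal sampling design with kernel `K`: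
for every `s ⊆ U`, `∑_{s' ⊇ s} P(s') = det(K_{|s})`. -/
def IsDSD {N : ℕ} (P : Finset (Fin N) → ℝ) (K : Matrix (Fin N) (Fin N) ℂ) : Prop :=
  ∀ s : Finset (Fin N),
    ((∑ s' ∈ Finset.univ.filter (fun s' => s ⊆ s'), P s' : ℝ) : ℂ) =
      (K.submatrix (fun i : {x // x ∈ s} => i.1) (fun j : {x // x ∈ s} => j.1)).det

/-!
Expanding the square, the mean square error of `∑_{k ∈ s} a_k` (here `a_k = w_k y_k`) only
involves the first and second order inclusion probabilities `π_k = P(k ∈ s)` and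
`π_{kl} = P({k, l} ⊆ s)`: it equals `∑_{k,l} a_k a_l (π_{kl} - π_k π_l) + (∑_k a_k π_k - t_y)²`.
For a determinantal design these are the principal minors `π_k = K_kk` and
`π_{kl} = K_kk K_ll - K_kl K_lk = K_kk K_ll - |K_kl|²`, the last step by hermitianity, and
`∑_s P(s) = 1` is the empty minor.
-/

open Finset

namespace Matrix

variable {ι R : Type*} [DecidableEq ι] [CommRing R] (A : Matrix ι ι R)

theorem det_submatrix_singleton (k : ι) :
    (A.submatrix ((↑) : ({k} : Finset ι) → ι) (↑)).det = A k k :=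
  det_unique _

theorem det_submatrix_pair {k l : ι} (hkl : k ≠ l) :
    (A.submatrix ((↑) : ({k, l} : Finset ι) → ι) (↑)).det = A k k * A l l - A k l * A l k := by
  let v : Fin 2 → ({k, l} : Finset ι) := ![⟨k, by simp⟩, ⟨l, by simp⟩]
  have hv : Function.Bijective v := by
    refine (Fintype.bijective_iff_injective_and_card v).2 ⟨?_, by simp [card_pair hkl]⟩
    intro i j hij
    fin_cases i <;> fin_cases j <;> simp_all [v, hkl.symm]
  rw [← det_submatrix_equiv_self (Equiv.ofBijective v hv), det_fin_two]
  rfl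

end Matrix

section SamplingDesign

variable {ι R : Type*} [Fintype ι] [DecidableEq ι] [CommRing R] (P : Finset ι → R)

/-- `P(s ⊆ S)` for a random sample `S` drawn from `P`. -/
def inclusionProb (s : Finset ι) : R := ∑ s' with s ⊆ s', P s'

def inclusionCov (k l : ι) : R :=
  inclusionProb P {k, l} - inclusionProb P {k} * inclusionProb P {l}

theorem sum_mul_sum_mem_eq (a : ι → R) :
    ∑ s, P s * ∑ k ∈ s, a k = ∑ k, a k * inclusionProb P {k} := by
  simp_rw [mul_sum]
  rw [sum_comm' (t' := univ) (s' := fun k => {s | {k} ⊆ s}) (by simp)]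
  simp_rw [inclusionProb, mul_sum, mul_comm]

theorem sum_mul_sum_mem_sq_eq (a : ι → R) :
    ∑ s, P s * (∑ k ∈ s, a k) ^ 2 = ∑ k, ∑ l, a k * a l * inclusionProb P {k, l} := by
  simp_rw [sq, sum_mul_sum, ← sum_product', mul_sum]
  rw [sum_comm' (t' := univ ×ˢ univ) (s' := fun p => {s | {p.1, p.2} ⊆ s})
    (by simp [insert_subset_iff])]
  simp_rw [inclusionProb, mul_sum, mul_comm]

theorem inclusionProb_empty : inclusionProb P ∅ = ∑ s, P s := by
  simp [inclusionProb]

theorem sum_mul_sum_mem_sub_sq_eq (hP : ∑ s, P s = 1) (a : ι → R) (t : R) :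
    ∑ s, P s * (∑ k ∈ s, a k - t) ^ 2 =
      ∑ k, ∑ l, a k * a l * inclusionCov P k l + (∑ k, a k * inclusionProb P {k} - t) ^ 2 := by
  have hexpand : ∀ s, P s * (∑ k ∈ s, a k - t) ^ 2 =
      P s * (∑ k ∈ s, a k) ^ 2 - 2 * t * (P s * ∑ k ∈ s, a k) + t ^ 2 * P s := fun s => by ring
  have hmean_sq : (∑ k, a k * inclusionProb P {k}) ^ 2 =
      ∑ k, ∑ l, a k * a l * (inclusionProb P {k} * inclusionProb P {l}) := by
    rw [sq, sum_mul_sum]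
    exact sum_congr rfl fun k _ => sum_congr rfl fun l _ => by ring
  simp_rw [hexpand, sum_add_distrib, sum_sub_distrib, ← mul_sum, hP, sum_mul_sum_mem_sq_eq,
    sum_mul_sum_mem_eq, inclusionCov, mul_sub, sum_sub_distrib, ← hmean_sq]
  ring

end SamplingDesign

namespace IsDSD

variable {N : ℕ} {P : Finset (Fin N) → ℝ} {K : Matrix (Fin N) (Fin N) ℂ}

theorem ofReal_inclusionProb (h : IsDSD P K) (s : Finset (Fin N)) :
    ((inclusionProb P s : ℝ) : ℂ) = (K.submatrix ((↑) : s → Fin N) (↑)).det :=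
  h s

theorem sum_eq_one (h : IsDSD P K) : ∑ s, P s = 1 := by
  have := h.ofReal_inclusionProb ∅
  rw [Matrix.det_isEmpty, inclusionProb_empty] at this
  exact_mod_cast this

theorem ofReal_inclusionProb_singleton (h : IsDSD P K) (k : Fin N) :
    ((inclusionProb P {k} : ℝ) : ℂ) = K k k := by
  rw [h.ofReal_inclusionProb, Matrix.det_submatrix_singleton]

theorem inclusionProb_singleton (h : IsDSD P K) (k : Fin N) :
    inclusionProb P {k} = (K k k).re := by
  rw [← h.ofReal_inclusionProb_singleton, Complex.ofReal_re]

theorem ofReal_re_diag (h : IsDSD P K) (k : Fin N) : ((K k k).re : ℂ) = K k k := by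
  rw [← h.inclusionProb_singleton, h.ofReal_inclusionProb_singleton]

theorem inclusionProb_pair (h : IsDSD P K) (hK : K.IsHermitian) {k l : Fin N} (hkl : k ≠ l) :
    inclusionProb P {k, l} = (K k k).re * (K l l).re - ‖K k l‖ ^ 2 := by
  apply Complex.ofReal_injective
  push_cast
  rw [h.ofReal_re_diag, h.ofReal_re_diag, h.ofReal_inclusionProb, Matrix.det_submatrix_pair _ hkl,
    ← hK.apply l k, Complex.star_def, Complex.mul_conj']

theorem inclusionCov_self (h : IsDSD P K) (k : Fin N) :
    inclusionCov P k k = (K k k).re * (1 - (K k k).re) := by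
  rw [inclusionCov, pair_eq_singleton, h.inclusionProb_singleton]
  ring

theorem inclusionCov_of_ne (h : IsDSD P K) (hK : K.IsHermitian) {k l : Fin N} (hkl : k ≠ l) :
    inclusionCov P k l = -‖K k l‖ ^ 2 := by
  rw [inclusionCov, h.inclusionProb_pair hK hkl, h.inclusionProb_singleton,
    h.inclusionProb_singleton]
  ring

end IsDSD

theorem mse_linear_estimator_general {N : ℕ} (K : Matrix (Fin N) (Fin N) ℂ) (hK : K.IsHermitian)
    (P : Finset (Fin N) → ℝ) (hDSD : IsDSD P K) (y w : Fin N → ℝ) :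
    (∑ s : Finset (Fin N), P s * ((∑ k ∈ s, w k * y k) - ∑ k, y k) ^ 2) =
      (∑ k, (w k * y k) ^ 2 * ((K k k).re * (1 - (K k k).re)))
        - (∑ k, ∑ l ∈ Finset.univ.erase k,
            (w k * y k) * (w l * y l) * ‖K k l‖ ^ 2)
        + (∑ k, (w k * (K k k).re - 1) * y k) ^ 2 := by
  set a : Fin N → ℝ := fun k => w k * y k
  have hrow (k : Fin N) : ∑ l, a k * a l * inclusionCov P k l =
      a k ^ 2 * ((K k k).re * (1 - (K k k).re)) - ∑ l ∈ univ.erase k, a k * a l * ‖K k l‖ ^ 2 := by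
    rw [← add_sum_erase _ _ (mem_univ k), hDSD.inclusionCov_self, sub_eq_add_neg (a k ^ 2 * _),
      ← sum_neg_distrib]
    congr 1
    · ring
    · refine sum_congr rfl fun l hl => ?_
      rw [hDSD.inclusionCov_of_ne hK (ne_of_mem_erase hl).symm]
      ring
  have hbias : ∑ k, a k * inclusionProb P {k} - ∑ k, y k = ∑ k, (w k * (K k k).re - 1) * y k := by
    simp_rw [← sum_sub_distrib, hDSD.inclusionProb_singleton, a, sub_one_mul, mul_right_comm]
  rw [sum_mul_sum_mem_sub_sq_eq P hDSD.sum_eq_one, hbias, sum_congr rfl fun k _ => hrow k,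
    sum_sub_distrib]

/-- **Mean square error of a homogeneous linear estimator under a determinantal
sampling design.** With `t̂_{yw}(s) = ∑_{k∈s} w_k y_k` and `t_y = ∑_k y_k`,
`MSE = ∑_k (w_k y_k)² K_{kk}(1−K_{kk}) − ∑_{k≠l} w_k y_k w_l y_l |K_{kl}|²
      + (∑_k (w_k K_{kk} − 1) y_k)²`. -/
theorem mse_linear_estimator {N : ℕ} (K : Matrix (Fin N) (Fin N) ℂ) (hK : K.IsHermitian)
    (P : Finset (Fin N) → ℝ) (hpos : ∀ s, 0 ≤ P s) (hsum : ∑ s, P s = 1)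
    (hDSD : IsDSD P K) (y w : Fin N → ℝ) :
    (∑ s : Finset (Fin N), P s * ((∑ k ∈ s, w k * y k) - ∑ k, y k) ^ 2) =
      (∑ k, (w k * y k) ^ 2 * ((K k k).re * (1 - (K k k).re)))
        - (∑ k, ∑ l ∈ Finset.univ.erase k,
            (w k * y k) * (w l * y l) * ‖K k l‖ ^ 2)
        + (∑ k, (w k * (K k k).re - 1) * y k) ^ 2 :=
  mse_linear_estimator_general K hK P hDSD y w
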